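/- Let N ≥ 3, let a ∈ C²(ℝ) with a(s) ≥ ν > 0 for all s ∈ ℝ, let k > 0 and a₁ > 0 with lim_{s→+∞} a(s)/s^k = a₁, let 1 < p < ((k+1)N+2)/(N−2) and m > 0, let g be the solution of g'(s) = 1/√(a(g(s))), g(0) = 0, and let h(t) = (|g(t)|^{p−1} g(t) − m g(t))/√(a(g(t))). Assume that the dual problem −Δv = h(v) in ℝ^N, v > 0, v radially symmetric, has at most one solution v ∈ C²(ℝ^N) with v, |∇v| ∈ L²(ℝ^N), up to translations. Then the problem −a(u)Δu − (1/2)a'(u)|∇u|² + m u = u^p in ℝ^N, u > 0, u radially symmetric, has at most one solution u ∈ C²(ℝ^N) with u, |∇u| ∈ L²(ℝ^N) and a(u)|∇u|² ∈ L¹(ℝ^N), up to translations; that is, any two such solutions u₁, u₂ satisfy u₁(·) = u₂(· + x₀) for some x₀ ∈ ℝ^N. -/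

import Mathlib

open Filter MeasureTheory Real Topology

/-- The Laplacian of `u : ℝ^N → ℝ`, as the sum of second partial derivatives. -/
noncomputable def lap {N : ℕ} (u : EuclideanSpace ℝ (Fin N) → ℝ)
    (x : EuclideanSpace ℝ (Fin N)) : ℝ :=
  ∑ i : Fin N, fderiv ℝ (fun y => fderiv ℝ u y (EuclideanSpace.single i 1)) x
    (EuclideanSpace.single i 1)

/-- `v` is a positive radial classical `H¹` solution of the dual problem `-Δv = h(v)`. -/
def IsDualSolution (N : ℕ) (h : ℝ → ℝ) (v : EuclideanSpace ℝ (Fin N) → ℝ) : Prop :=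
  ContDiff ℝ 2 v ∧
  MemLp v 2 volume ∧
  MemLp (fun x => ‖gradient v x‖) 2 volume ∧
  (∀ x, 0 < v x) ∧
  (∀ x y, ‖x‖ = ‖y‖ → v x = v y) ∧
  (∀ x, -lap v x = h (v x))

/-- `u` is a positive radial solution in `X ∩ C²(ℝ^N)` of the quasi-linear problem. -/
def IsQLSolution (N : ℕ) (a : ℝ → ℝ) (m p : ℝ)
    (u : EuclideanSpace ℝ (Fin N) → ℝ) : Prop :=
  ContDiff ℝ 2 u ∧
  MemLp u 2 volume ∧
  MemLp (fun x => ‖gradient u x‖) 2 volume ∧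
  Integrable (fun x => a (u x) * ‖gradient u x‖ ^ 2) volume ∧
  (∀ x, 0 < u x) ∧
  (∀ x y, ‖x‖ = ‖y‖ → u x = u y) ∧
  (∀ x, -(a (u x) * lap u x) - (1 / 2) * deriv a (u x) * ‖gradient u x‖ ^ 2
      + m * u x = u x ^ p)

/-!
Put `G(t) = ∫₀ᵗ √a` (`sqrtPrimitive a`), the inverse of `g`. For a solution `u` of the
quasilinear problem, `v = G ∘ u` solves the dual problem: the chain rule gives
`Δv = G''(u)|∇u|² + G'(u)Δu` with `G' = √a`, `G'' = a'/(2√a)`, and `|∇v|² = a(u)|∇u|²`.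
To get `v ∈ L²` one needs `u` bounded, which holds for radial `u` with `u, |∇u| ∈ L²`: by Fubini
`u² + |∇u|²` is integrable along some line, where `u` is then bounded by the fundamental theorem
of calculus, and every sphere around the origin outside a compact ball meets that line. Since `G`
is injective, uniqueness up to translation for the dual problem transfers to the quasilinear one.
-/

noncomputable def sqrtPrimitive (a : ℝ → ℝ) (t : ℝ) : ℝ :=
  ∫ s in (0 : ℝ)..t, √(a s)

section SqrtPrimitive

variable {a : ℝ → ℝ}

@[simp]
lemma sqrtPrimitive_zero : sqrtPrimitive a 0 = 0 :=
  intervalIntegral.integral_same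

lemma hasDerivAt_sqrtPrimitive (ha : Continuous a) (t : ℝ) :
    HasDerivAt (sqrtPrimitive a) √(a t) t :=
  (continuous_sqrt.comp ha).integral_hasStrictDerivAt 0 t |>.hasDerivAt

lemma continuous_sqrtPrimitive (ha : Continuous a) : Continuous (sqrtPrimitive a) :=
  continuous_iff_continuousAt.2 fun t => (hasDerivAt_sqrtPrimitive ha t).continuousAt

lemma strictMono_sqrtPrimitive (ha : Continuous a) (hpos : ∀ s, 0 < a s) :
    StrictMono (sqrtPrimitive a) :=
  strictMono_of_hasDerivAt_pos (hasDerivAt_sqrtPrimitive ha) fun t => sqrt_pos.2 (hpos t)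

lemma contDiff_sqrtPrimitive (ha : ContDiff ℝ 1 a) (hpos : ∀ s, 0 < a s) :
    ContDiff ℝ 2 (sqrtPrimitive a) := by
  have hderiv : deriv (sqrtPrimitive a) = fun t => √(a t) :=
    funext fun t => (hasDerivAt_sqrtPrimitive ha.continuous t).deriv
  rw [show (2 : WithTop ℕ∞) = 1 + 1 from rfl, contDiff_succ_iff_deriv, hderiv]
  exact ⟨fun t => (hasDerivAt_sqrtPrimitive ha.continuous t).differentiableAt, by simp,
    ha.sqrt fun s => (hpos s).ne'⟩

lemma leftInverse_sqrtPrimitive (ha : Continuous a) (hpos : ∀ s, 0 < a s) {g : ℝ → ℝ}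
    (hg : ∀ s, HasDerivAt g (1 / √(a (g s))) s) (hg0 : g 0 = 0) :
    Function.LeftInverse (sqrtPrimitive a) g := by
  have hderiv : ∀ s, HasDerivAt (fun s => sqrtPrimitive a (g s) - s) 0 s := fun s => by
    have := ((hasDerivAt_sqrtPrimitive ha (g s)).comp s (hg s)).sub (hasDerivAt_id s)
    rwa [mul_one_div_cancel (sqrt_pos.2 (hpos _)).ne', sub_self] at this
  intro s
  have := is_const_of_deriv_eq_zero (fun s => (hderiv s).differentiableAt)
    (fun s => (hderiv s).deriv) s 0
  simpa [hg0, sub_eq_zero] using this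

lemma abs_sqrtPrimitive_le {C t : ℝ} (hC : ∀ s, |s| ≤ |t| → √(a s) ≤ C) :
    |sqrtPrimitive a t| ≤ C * |t| := by
  have hbound : ∀ s ∈ Set.uIoc 0 t, ‖√(a s)‖ ≤ C := fun s hs => by
    rw [norm_of_nonneg (sqrt_nonneg _)]
    refine hC s (abs_le.2 ⟨?_, ?_⟩) <;> rcases Set.mem_uIoc.1 hs with h | h <;>
      cases abs_cases t <;> linarith
  simpa [sqrtPrimitive] using intervalIntegral.norm_integral_le_of_norm_le_const hbound

end SqrtPrimitive

lemma HasDerivAt.gradient_comp {F : Type*} [NormedAddCommGroup F] [InnerProductSpace ℝ F]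
    [CompleteSpace F] {φ : ℝ → ℝ} {φ' : ℝ} {u : F → ℝ} {x : F}
    (hφ : HasDerivAt φ φ' (u x)) (hu : DifferentiableAt ℝ u x) :
    gradient (φ ∘ u) x = φ' • gradient u x := by
  rw [gradient, gradient, (hφ.comp_hasFDerivAt x hu.hasFDerivAt).fderiv, map_smul]

section Laplacian

variable {N : ℕ} {u : EuclideanSpace ℝ (Fin N) → ℝ}

lemma fderiv_apply_single_eq_gradient_apply (u : EuclideanSpace ℝ (Fin N) → ℝ)
    (x : EuclideanSpace ℝ (Fin N)) (i : Fin N) :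
    fderiv ℝ u x (EuclideanSpace.single i 1) = gradient u x i := by
  rw [← inner_gradient_left, EuclideanSpace.inner_single_right]
  simp

lemma sum_sq_fderiv_apply_single (u : EuclideanSpace ℝ (Fin N) → ℝ)
    (x : EuclideanSpace ℝ (Fin N)) :
    ∑ i, fderiv ℝ u x (EuclideanSpace.single i 1) ^ 2 = ‖gradient u x‖ ^ 2 := by
  simp only [fderiv_apply_single_eq_gradient_apply, EuclideanSpace.real_norm_sq_eq]

lemma lap_comp {φ φ' φ'' : ℝ → ℝ} (hu : ContDiff ℝ 2 u) (hφ : ∀ t, HasDerivAt φ (φ' t) t)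
    (hφ' : ∀ t, HasDerivAt φ' (φ'' t) t) (x : EuclideanSpace ℝ (Fin N)) :
    lap (φ ∘ u) x = φ'' (u x) * ‖gradient u x‖ ^ 2 + φ' (u x) * lap u x := by
  have hdu : Differentiable ℝ u := hu.differentiable two_ne_zero
  have hdfu : Differentiable ℝ (fderiv ℝ u) :=
    (hu.fderiv_right (m := 1) le_rfl).differentiable one_ne_zero
  have hpartial : ∀ i : Fin N,
      fderiv ℝ (fun y => fderiv ℝ (φ ∘ u) y (EuclideanSpace.single i 1)) x
        (EuclideanSpace.single i 1) = φ'' (u x) * fderiv ℝ u x (EuclideanSpace.single i 1) ^ 2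
        + φ' (u x) * fderiv ℝ (fun y => fderiv ℝ u y (EuclideanSpace.single i 1)) x
          (EuclideanSpace.single i 1) := fun i => by
    have hfirst : (fun y => fderiv ℝ (φ ∘ u) y (EuclideanSpace.single i 1))
        = fun y => φ' (u y) * fderiv ℝ u y (EuclideanSpace.single i 1) := funext fun y => by
      simp [((hφ (u y)).comp_hasFDerivAt y (hdu y).hasFDerivAt).fderiv]
    have hsecond : HasFDerivAt (fun y => φ' (u y) * fderiv ℝ u y (EuclideanSpace.single i 1))
        _ x := ((hφ' (u x)).comp_hasFDerivAt x (hdu x).hasFDerivAt).mul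
      ((hdfu.clm_apply (differentiable_const (EuclideanSpace.single i 1))) x).hasFDerivAt
    rw [hfirst, hsecond.fderiv]
    simp only [_root_.add_apply, _root_.smul_apply, smul_eq_mul,
      Function.comp_apply]
    ring
  simp only [lap, hpartial, Finset.sum_add_distrib, ← Finset.mul_sum, sum_sq_fderiv_apply_single]

end Laplacian

lemma exists_abs_le_of_integrable_sq_add_deriv_sq {ψ ψ' : ℝ → ℝ}
    (hψ : ∀ t, HasDerivAt ψ (ψ' t) t) (hint : Integrable fun t => ψ t ^ 2 + ψ' t ^ 2) :
    ∃ C, ∀ t, |ψ t| ≤ C := by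
  set I := ∫ t, (ψ t ^ 2 + ψ' t ^ 2)
  have hcont : Continuous ψ := continuous_iff_continuousAt.2 fun t => (hψ t).continuousAt
  have hψ' : ψ' = deriv ψ := funext fun t => (hψ t).deriv.symm
  have hdom : ∀ t, ‖2 * ψ t * ψ' t‖ ≤ ψ t ^ 2 + ψ' t ^ 2 := fun t =>
    abs_le.2 ⟨by nlinarith [sq_nonneg (ψ t + ψ' t)], by nlinarith [sq_nonneg (ψ t - ψ' t)]⟩
  have hint' : Integrable fun t => 2 * ψ t * ψ' t := by
    refine hint.mono' ?_ (ae_of_all _ hdom)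
    rw [hψ']
    exact (continuous_const.mul hcont).aestronglyMeasurable.mul
      (stronglyMeasurable_deriv ψ).aestronglyMeasurable
  refine ⟨√(ψ 0 ^ 2 + I), fun t => abs_le_sqrt ?_⟩
  have hftc : ∫ s in (0 : ℝ)..t, 2 * ψ s * ψ' s = ψ t ^ 2 - ψ 0 ^ 2 :=
    intervalIntegral.integral_eq_sub_of_hasDerivAt
      (fun s _ => by simpa [mul_comm, mul_assoc] using (hψ s).pow 2) hint'.intervalIntegrable
  have hle : ∫ s in (0 : ℝ)..t, 2 * ψ s * ψ' s ≤ I :=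
    calc ∫ s in (0 : ℝ)..t, 2 * ψ s * ψ' s
        ≤ ∫ s in Set.uIoc 0 t, ‖2 * ψ s * ψ' s‖ :=
          (le_norm_self _).trans intervalIntegral.norm_integral_le_integral_norm_uIoc
      _ ≤ ∫ s, ‖2 * ψ s * ψ' s‖ :=
          setIntegral_le_integral hint'.norm (ae_of_all _ fun _ => norm_nonneg _)
      _ ≤ I := integral_mono hint'.norm hint hdom
  linarith

lemma exists_integrable_comp_add_smul_single {n : ℕ} {E : Type*} [NormedAddCommGroup E]
    {F : EuclideanSpace ℝ (Fin (n + 1)) → E} (hF : Integrable F) :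
    ∃ b, Integrable fun t : ℝ => F (b + t • EuclideanSpace.single 0 1) := by
  let Φ := (MeasurableEquiv.piFinSuccAbove (fun _ : Fin (n + 1) => ℝ) 0).symm.trans
    (MeasurableEquiv.toLp 2 (Fin (n + 1) → ℝ))
  have hΦ : MeasurePreserving Φ (volume.prod volume) volume :=
    (PiLp.volume_preserving_toLp _).comp (volume_preserving_piFinSuccAbove _ 0).symm
  obtain ⟨y, hy⟩ := ((hΦ.integrable_comp_emb Φ.measurableEmbedding).2 hF).prod_left_ae.exists
  refine ⟨Φ (0, y), hy.congr (ae_of_all _ fun t => congrArg F ?_)⟩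
  ext i
  cases i using Fin.cases <;> simp [Φ]

lemma exists_abs_le_of_radial_of_abs_le_on_line {E : Type*} [NormedAddCommGroup E]
    [NormedSpace ℝ E] [ProperSpace E] {u : E → ℝ} (hu : Continuous u)
    (hrad : ∀ x y, ‖x‖ = ‖y‖ → u x = u y) {b e : E} (he : e ≠ 0) {C : ℝ}
    (hline : ∀ t : ℝ, |u (b + t • e)| ≤ C) : ∃ M, ∀ x, |u x| ≤ M := by
  obtain ⟨C', hC'⟩ :=
    (isCompact_closedBall (0 : E) ‖b‖).exists_bound_of_continuousOn hu.continuousOn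
  refine ⟨max C C', fun x => ?_⟩
  rcases le_total ‖x‖ ‖b‖ with hx | hx
  · exact le_max_of_le_right (hC' x (mem_closedBall_zero_iff.2 hx))
  · set T := (‖x‖ + ‖b‖) / ‖e‖
    have hT : 0 ≤ T := by positivity
    have hfar : ‖x‖ ≤ ‖b + T • e‖ := by
      have hTe : ‖T • e‖ = ‖x‖ + ‖b‖ := by
        rw [norm_smul, norm_of_nonneg hT, div_mul_cancel₀ _ (norm_ne_zero_iff.2 he)]
      have := norm_sub_le (b + T • e) b
      rw [add_sub_cancel_left, hTe] at this
      linarith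
    obtain ⟨t, -, ht⟩ := intermediate_value_Icc hT (f := fun t : ℝ => ‖b + t • e‖)
      (by fun_prop) ⟨by simpa using hx, hfar⟩
    rw [hrad x (b + t • e) ht.symm]
    exact le_max_of_le_left (hline t)

lemma exists_abs_le_of_radial_of_memLp {N : ℕ} {u : EuclideanSpace ℝ (Fin N) → ℝ}
    (hu : ContDiff ℝ 1 u) (hu2 : MemLp u 2) (hgrad : MemLp (fun x => ‖gradient u x‖) 2)
    (hrad : ∀ x y, ‖x‖ = ‖y‖ → u x = u y) : ∃ M, ∀ x, |u x| ≤ M := by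
  rcases N with _ | n
  · exact ⟨|u 0|, fun x => by rw [Subsingleton.elim x 0]⟩
  set e : EuclideanSpace ℝ (Fin (n + 1)) := EuclideanSpace.single 0 1
  obtain ⟨b, hb⟩ := exists_integrable_comp_add_smul_single
    (((memLp_two_iff_integrable_sq hu2.1).1 hu2).add
      ((memLp_two_iff_integrable_sq hgrad.1).1 hgrad))
  have hψ : ∀ t : ℝ, HasDerivAt (fun t => u (b + t • e)) (gradient u (b + t • e) 0) t := by
    intro t
    rw [← fderiv_apply_single_eq_gradient_apply]
    exact ((hu.differentiable one_ne_zero) _).hasFDerivAt.comp_hasDerivAt t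
      (by simpa using ((hasDerivAt_id t).smul_const e).const_add b)
  have hcont : Continuous fun t : ℝ => u (b + t • e) ^ 2 + gradient u (b + t • e) 0 ^ 2 := by
    have := hu.continuous_fderiv one_ne_zero
    simp_rw [← fderiv_apply_single_eq_gradient_apply]
    fun_prop
  have hdom : ∀ t : ℝ, ‖u (b + t • e) ^ 2 + gradient u (b + t • e) 0 ^ 2‖
      ≤ u (b + t • e) ^ 2 + ‖gradient u (b + t • e)‖ ^ 2 := fun t => by
    rw [norm_of_nonneg (by positivity)]
    have : |gradient u (b + t • e) 0| ≤ |‖gradient u (b + t • e)‖| := by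
      simpa using PiLp.norm_apply_le (gradient u (b + t • e)) 0
    linarith [sq_le_sq.2 this]
  obtain ⟨C, hC⟩ := exists_abs_le_of_integrable_sq_add_deriv_sq hψ
    (hb.mono' hcont.aestronglyMeasurable (ae_of_all _ hdom))
  exact exists_abs_le_of_radial_of_abs_le_on_line hu.continuous hrad
    (by simp [e]) hC

section Transfer

variable {N : ℕ} {a : ℝ → ℝ} {u : EuclideanSpace ℝ (Fin N) → ℝ}

lemma memLp_sqrtPrimitive_comp (ha : Continuous a) (hu : MemLp u 2) {M : ℝ}
    (hM : ∀ x, |u x| ≤ M) : MemLp (sqrtPrimitive a ∘ u) 2 := by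
  obtain ⟨C, hC⟩ := (isCompact_Icc (a := -M) (b := M)).exists_bound_of_continuousOn
    (continuous_sqrt.comp ha).continuousOn
  refine hu.of_le_mul (c := C) ((continuous_sqrtPrimitive ha).comp_aestronglyMeasurable hu.1)
    (ae_of_all _ fun x => ?_)
  exact abs_sqrtPrimitive_le fun s hs =>
    (le_abs_self _).trans (hC s (abs_le.1 (hs.trans (hM x))))

lemma norm_gradient_sqrtPrimitive_comp (ha : Continuous a) {x : EuclideanSpace ℝ (Fin N)}
    (hu : DifferentiableAt ℝ u x) :
    ‖gradient (sqrtPrimitive a ∘ u) x‖ = √(a (u x)) * ‖gradient u x‖ := by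
  rw [(hasDerivAt_sqrtPrimitive ha (u x)).gradient_comp hu, norm_smul,
    norm_of_nonneg (sqrt_nonneg _)]

lemma memLp_norm_gradient_sqrtPrimitive_comp (ha : Continuous a) (ha0 : ∀ s, 0 ≤ a s)
    (hu : Differentiable ℝ u) (hgrad : AEStronglyMeasurable fun x => ‖gradient u x‖)
    (hint : Integrable fun x => a (u x) * ‖gradient u x‖ ^ 2) :
    MemLp (fun x => ‖gradient (sqrtPrimitive a ∘ u) x‖) 2 := by
  have hmeas : AEStronglyMeasurable fun x => √(a (u x)) * ‖gradient u x‖ :=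
    (continuous_sqrt.comp (ha.comp hu.continuous)).aestronglyMeasurable.mul hgrad
  simp_rw [norm_gradient_sqrtPrimitive_comp ha (hu _), memLp_two_iff_integrable_sq hmeas,
    mul_pow, sq_sqrt (ha0 _)]
  exact hint

lemma lap_sqrtPrimitive_comp (ha : ContDiff ℝ 1 a) (hpos : ∀ s, 0 < a s)
    (hu : ContDiff ℝ 2 u) (x : EuclideanSpace ℝ (Fin N)) :
    lap (sqrtPrimitive a ∘ u) x = deriv a (u x) / (2 * √(a (u x))) * ‖gradient u x‖ ^ 2
      + √(a (u x)) * lap u x :=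
  lap_comp hu (hasDerivAt_sqrtPrimitive ha.continuous)
    (fun t => (ha.differentiable one_ne_zero t).hasDerivAt.sqrt (hpos t).ne') x

lemma neg_lap_sqrtPrimitive_comp (ha : ContDiff ℝ 1 a) (hpos : ∀ s, 0 < a s)
    (hu : ContDiff ℝ 2 u) {m p : ℝ} {x : EuclideanSpace ℝ (Fin N)}
    (heq : -(a (u x) * lap u x) - (1 / 2) * deriv a (u x) * ‖gradient u x‖ ^ 2
      + m * u x = u x ^ p) :
    -lap (sqrtPrimitive a ∘ u) x = (u x ^ p - m * u x) / √(a (u x)) := by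
  have hsqrt := sqrt_pos.2 (hpos (u x))
  rw [lap_sqrtPrimitive_comp ha hpos hu, eq_div_iff hsqrt.ne', ← heq]
  field_simp
  rw [sq_sqrt (hpos _).le]
  ring

theorem IsQLSolution.isDualSolution_sqrtPrimitive_comp {m p : ℝ} {g h : ℝ → ℝ}
    (ha : ContDiff ℝ 1 a) (hpos : ∀ s, 0 < a s)
    (hg : ∀ s, HasDerivAt g (1 / √(a (g s))) s) (hg0 : g 0 = 0)
    (hh : ∀ t, h t = (|g t| ^ (p - 1) * g t - m * g t) / √(a (g t)))
    (hu : IsQLSolution N a m p u) : IsDualSolution N h (sqrtPrimitive a ∘ u) := by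
  obtain ⟨hC2, hL2, hgradL2, hint, hupos, hrad, heq⟩ := hu
  have hmono := strictMono_sqrtPrimitive ha.continuous hpos
  have hgG : Function.LeftInverse g (sqrtPrimitive a) :=
    (leftInverse_sqrtPrimitive ha.continuous hpos hg hg0).rightInverse_of_injective
      hmono.injective
  obtain ⟨M, hM⟩ := exists_abs_le_of_radial_of_memLp (hC2.of_le one_le_two) hL2 hgradL2 hrad
  refine ⟨(contDiff_sqrtPrimitive ha hpos).comp hC2,
    memLp_sqrtPrimitive_comp ha.continuous hL2 hM,
    memLp_norm_gradient_sqrtPrimitive_comp ha.continuous (fun s => (hpos s).le)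
      (hC2.differentiable two_ne_zero) hgradL2.1 hint,
    fun x => by simpa using hmono (hupos x),
    fun x y hxy => congrArg (sqrtPrimitive a) (hrad x y hxy), fun x => ?_⟩
  rw [neg_lap_sqrtPrimitive_comp ha hpos hC2 (heq x), hh, Function.comp_apply, hgG (u x),
    abs_of_pos (hupos x), rpow_sub_one (hupos x).ne', div_mul_cancel₀ _ (hupos x).ne']

end Transfer

theorem uniqueness_transfers_from_dual_general
    (N : ℕ)
    (a : ℝ → ℝ) (ν : ℝ) (hν : 0 < ν)
    (ha : ContDiff ℝ 2 a) (hbound : ∀ s, ν ≤ a s)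
    (p m : ℝ)
    (g : ℝ → ℝ)
    (hg : ∀ s, HasDerivAt g (1 / Real.sqrt (a (g s))) s) (hg0 : g 0 = 0)
    (h : ℝ → ℝ)
    (hh : ∀ t, h t = (|g t| ^ (p - 1) * g t - m * g t) / Real.sqrt (a (g t)))
    (hdual : ∀ v₁ v₂ : EuclideanSpace ℝ (Fin N) → ℝ,
      IsDualSolution N h v₁ → IsDualSolution N h v₂ →
      ∃ x₀ : EuclideanSpace ℝ (Fin N), ∀ x, v₁ x = v₂ (x + x₀)) :
    ∀ u₁ u₂ : EuclideanSpace ℝ (Fin N) → ℝ,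
      IsQLSolution N a m p u₁ → IsQLSolution N a m p u₂ →
      ∃ x₀ : EuclideanSpace ℝ (Fin N), ∀ x, u₁ x = u₂ (x + x₀) := by
  intro u₁ u₂ hu₁ hu₂
  have hpos : ∀ s, 0 < a s := fun s => hν.trans_le (hbound s)
  have ha₁ : ContDiff ℝ 1 a := ha.of_le one_le_two
  obtain ⟨x₀, hx₀⟩ := hdual _ _
    (hu₁.isDualSolution_sqrtPrimitive_comp ha₁ hpos hg hg0 hh)
    (hu₂.isDualSolution_sqrtPrimitive_comp ha₁ hpos hg hg0 hh)
  exact ⟨x₀, fun x => (strictMono_sqrtPrimitive ha.continuous hpos).injective (hx₀ x)⟩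

theorem uniqueness_transfers_from_dual
    (N : ℕ) (hN : 3 ≤ N)
    (a : ℝ → ℝ) (ν : ℝ) (hν : 0 < ν)
    (ha : ContDiff ℝ 2 a) (hbound : ∀ s, ν ≤ a s)
    (k a₁ : ℝ) (hk : 0 < k) (ha₁ : 0 < a₁)
    (hlim : Tendsto (fun s : ℝ => a s / s ^ k) atTop (𝓝 a₁))
    (p m : ℝ) (hp1 : 1 < p) (hp2 : p < ((k + 1) * N + 2) / (N - 2)) (hm : 0 < m)
    (g : ℝ → ℝ)
    (hg : ∀ s, HasDerivAt g (1 / Real.sqrt (a (g s))) s) (hg0 : g 0 = 0)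
    (h : ℝ → ℝ)
    (hh : ∀ t, h t = (|g t| ^ (p - 1) * g t - m * g t) / Real.sqrt (a (g t)))
    (hdual : ∀ v₁ v₂ : EuclideanSpace ℝ (Fin N) → ℝ,
      IsDualSolution N h v₁ → IsDualSolution N h v₂ →
      ∃ x₀ : EuclideanSpace ℝ (Fin N), ∀ x, v₁ x = v₂ (x + x₀)) :
    ∀ u₁ u₂ : EuclideanSpace ℝ (Fin N) → ℝ,
      IsQLSolution N a m p u₁ → IsQLSolution N a m p u₂ →
      ∃ x₀ : EuclideanSpace ℝ (Fin N), ∀ x, u₁ x = u₂ (x + x₀) :=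
  uniqueness_transfers_from_dual_general N a ν hν ha hbound p m g hg hg0 h hh hdual
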